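/- Let Ψ : 𝒜 → 𝕊 be a polynomial monogenic spinor (D_iΨ = 0 for all i) such that R_{αs}Ψ = 0 for all α = 1,…,n and all s ≤ r, for some fixed r ∈ {1,…,k−1}, and additionally ∂_{y_{st}}Ψ = 0 for all s ≤ r < t. Then Ψ depends only on the variables x_{αj} with j > r and y_{cd} with r < c < d; in particular ∂_{x_{αs}}Ψ = 0 for all α = 1,…,n+1 and s ≤ r. -/

import Mathlib

/-!
Fix `α ≤ n`. The x-variables commute with the y-derivatives, so in `[R_{αs}, R_{αt}]` only
`∂_{x_{αs}}` hitting the coefficient `x_{αs}` of `∂_{y_{ts}}` in `R_{αt}` (and symmetrically)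
survives: `[R_{αs}, R_{αt}] = ∂_{y_{ts}}`. Hence `∂_{y_{st}}Ψ = 0` for `s, t ≤ r`, and with the
hypothesis for `t > r`, every `∂_{y_{st}}` with `s ≤ r` kills `Ψ`. Then
`R_{αs}Ψ = L_{αs}Ψ = ∂_{x_{αs}}Ψ`, so `∂_{x_{αs}}Ψ = 0` for `α ≤ n`, and `D_sΨ = 0` collapses
to `ε_{n+1} · ∂_{x_{n+1,s}}Ψ = 0`, where `ε_{n+1}` is invertible since `ε_{n+1}² = -1`.
-/

open MvPolynomial

/-- Variables: the `x_{αi}` and the `y_{rs}` with `r < s`. -/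
abbrev Var (n k : ℕ) := (Fin (n + 1) × Fin k) ⊕ {p : Fin k × Fin k // p.1 < p.2}

/-- The weight of a variable: `1` for the `x`-variables, `2` for the `y`-variables. -/
def wvar (n k : ℕ) : Var n k → ℕ
  | Sum.inl _ => 1
  | Sum.inr _ => 2

/-- The signed derivative `∂_{y_{ij}}` (convention `y_{sr} = −y_{rs}`, `∂_{y_{ii}} = 0`). -/
noncomputable def pdYp {n k : ℕ} (i j : Fin k) (p : MvPolynomial (Var n k) ℂ) :
    MvPolynomial (Var n k) ℂ :=
  if h : i < j then pderiv (Sum.inr ⟨(i, j), h⟩) p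
  else if h' : j < i then -pderiv (Sum.inr ⟨(j, i), h'⟩) p
  else 0

/-- `L_{αi} = ∂_{x_{αi}} − ½ Σ_t x_{αt} ∂_{y_{it}}`. -/
noncomputable def Lop {n k : ℕ} (α : Fin (n + 1)) (i : Fin k)
    (p : MvPolynomial (Var n k) ℂ) : MvPolynomial (Var n k) ℂ :=
  pderiv (Sum.inl (α, i)) p -
    C (1 / 2 : ℂ) * ∑ t : Fin k, X (Sum.inl (α, t)) * pdYp i t p

/-- The `i`-th component `D_i = Σ_α ε_α · L_{αi}` of the `k`-Dirac operator, acting on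
`𝕊`-valued polynomials on `𝒜` (the spinor space `𝕊 = ℂ^m` with Clifford multiplication
by the matrices `ε α`). -/
noncomputable def Dop {n k m : ℕ} (ε : Fin (n + 1) → Matrix (Fin m) (Fin m) ℂ) (i : Fin k)
    (Ψ : Fin m → MvPolynomial (Var n k) ℂ) : Fin m → MvPolynomial (Var n k) ℂ :=
  fun u => ∑ α : Fin (n + 1), ∑ v : Fin m, C (ε α u v) * Lop α i (Ψ v)


/-- `R_{αi} = ∂_{x_{αi}} + ½ Σ_t x_{αt} ∂_{y_{it}}`. -/
noncomputable def Rop {n k : ℕ} (α : Fin (n + 1)) (i : Fin k)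
    (p : MvPolynomial (Var n k) ℂ) : MvPolynomial (Var n k) ℂ :=
  pderiv (Sum.inl (α, i)) p +
    C (1 / 2 : ℂ) * ∑ t : Fin k, X (Sum.inl (α, t)) * pdYp i t p

theorem MvPolynomial.exists_pderiv_X_eq_C {σ R : Type*} [CommSemiring R] (i j : σ) :
    ∃ a : R, pderiv i (X j) = C a := by
  classical
  exact ⟨if j = i then 1 else 0, by rw [pderiv_X]; split_ifs with h <;> simp [h]⟩

theorem MvPolynomial.derivation_comm_of_apply_X_eq_C {σ R : Type*} [CommRing R]
    {D₁ D₂ : Derivation R (MvPolynomial σ R) (MvPolynomial σ R)}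
    (h₁ : ∀ i, ∃ a, D₁ (X i) = C a) (h₂ : ∀ i, ∃ a, D₂ (X i) = C a)
    (p : MvPolynomial σ R) : D₁ (D₂ p) = D₂ (D₁ p) := by
  have h : ⁅D₁, D₂⁆ = 0 := by
    refine derivation_ext fun i => ?_
    obtain ⟨a, ha⟩ := h₁ i
    obtain ⟨b, hb⟩ := h₂ i
    simp [Derivation.commutator_apply, ha, hb]
  rw [← sub_eq_zero, ← Derivation.commutator_apply, h, Derivation.zero_apply]

theorem Derivation.finset_sum_apply {R A M ι : Type*} [CommSemiring R] [CommSemiring A]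
    [Algebra R A] [AddCommMonoid M] [Module A M] [Module R M] (s : Finset ι)
    (D : ι → Derivation R A M) (a : A) : (∑ i ∈ s, D i) a = ∑ i ∈ s, D i a := by
  rw [← coeFnAddMonoidHom_apply, map_sum, Finset.sum_apply]
  rfl

theorem mul_self_eq_neg_one_of_clifford {m : ℕ} {ι : Type*} [DecidableEq ι]
    {ε : ι → Matrix (Fin m) (Fin m) ℂ}
    (hcl : ∀ α β, ε α * ε β + ε β * ε α =
      if α = β then (-2 : ℂ) • (1 : Matrix (Fin m) (Fin m) ℂ) else 0) (α : ι) :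
    ε α * ε α = -1 := by
  have h := hcl α α
  rw [if_pos rfl, ← two_smul ℂ] at h
  exact smul_right_injective _ two_ne_zero (h.trans (neg_smul _ _ |>.trans (smul_neg _ _).symm))

theorem isUnit_of_clifford {m : ℕ} {ι : Type*} [DecidableEq ι]
    {ε : ι → Matrix (Fin m) (Fin m) ℂ}
    (hcl : ∀ α β, ε α * ε β + ε β * ε α =
      if α = β then (-2 : ℂ) • (1 : Matrix (Fin m) (Fin m) ℂ) else 0) (α : ι) :
    IsUnit (ε α) :=
  ⟨⟨ε α, -ε α, by rw [mul_neg, mul_self_eq_neg_one_of_clifford hcl, neg_neg],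
    by rw [neg_mul, mul_self_eq_neg_one_of_clifford hcl, neg_neg]⟩, rfl⟩

section
variable {n k : ℕ}
local notation "𝒫" => MvPolynomial (Var n k) ℂ
local notation "𝔇" => Derivation ℂ 𝒫 𝒫

noncomputable def pderivY (i j : Fin k) : 𝔇 :=
  if h : i < j then pderiv (Sum.inr ⟨(i, j), h⟩)
  else if h' : j < i then -pderiv (Sum.inr ⟨(j, i), h'⟩) else 0

theorem pdYp_eq_pderivY (i j : Fin k) (p : 𝒫) : pdYp i j p = pderivY i j p := by
  unfold pdYp pderivY
  split_ifs <;> rfl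

theorem exists_pderivY_X_eq_C (i j : Fin k) (v : Var n k) : ∃ a, pderivY i j (X v) = C a := by
  unfold pderivY
  split_ifs
  · exact exists_pderiv_X_eq_C _ _
  · obtain ⟨a, ha⟩ := exists_pderiv_X_eq_C (R := ℂ) (Sum.inr ⟨(j, i), ‹_›⟩) v
    exact ⟨-a, by simp [ha]⟩
  · exact ⟨0, by simp⟩

theorem pderivY_X_inl (i j : Fin k) (w : Fin (n + 1) × Fin k) :
    pderivY i j (X (Sum.inl w) : 𝒫) = 0 := by
  unfold pderivY
  split_ifs <;> simp [pderiv_X]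

theorem pderivY_swap (i j : Fin k) (p : 𝒫) : pderivY j i p = -pderivY i j p := by
  unfold pderivY
  rcases lt_trichotomy i j with h | rfl | h
  · simp [h, h.not_gt]
  · simp
  · simp [h, h.not_gt]

noncomputable def sumXPderivY (α : Fin (n + 1)) (i : Fin k) : 𝔇 :=
  ∑ t, (X (Sum.inl (α, t)) : 𝒫) • pderivY i t

theorem sumXPderivY_apply (α : Fin (n + 1)) (i : Fin k) (p : 𝒫) :
    sumXPderivY α i p = ∑ t, X (Sum.inl (α, t)) * pderivY i t p := by
  simp [sumXPderivY, Derivation.finset_sum_apply]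

noncomputable def rDerivation (α : Fin (n + 1)) (i : Fin k) : 𝔇 :=
  pderiv (Sum.inl (α, i)) + (1 / 2 : ℂ) • sumXPderivY α i

theorem Rop_eq_rDerivation (α : Fin (n + 1)) (i : Fin k) (p : 𝒫) :
    Rop α i p = rDerivation α i p := by
  simp [Rop, rDerivation, sumXPderivY_apply, pdYp_eq_pderivY, smul_eq_C_mul]

theorem pderiv_sumXPderivY (α : Fin (n + 1)) (s t : Fin k) (p : 𝒫) :
    pderiv (Sum.inl (α, s)) (sumXPderivY α t p) =
      sumXPderivY α t (pderiv (Sum.inl (α, s)) p) + pderivY t s p := by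
  classical
  have hcomm : ∀ u, pderiv (Sum.inl (α, s)) (pderivY t u p) =
      pderivY t u (pderiv (Sum.inl (α, s)) p) := fun u =>
    derivation_comm_of_apply_X_eq_C (exists_pderiv_X_eq_C _) (exists_pderivY_X_eq_C t u) p
  simp [sumXPderivY_apply, hcomm, pderiv_X, Pi.single_apply, Finset.sum_add_distrib]

theorem sumXPderivY_comm (α : Fin (n + 1)) (s t : Fin k) (p : 𝒫) :
    sumXPderivY α s (sumXPderivY α t p) = sumXPderivY α t (sumXPderivY α s p) := by
  have hcomm : ∀ u w, pderivY s u (pderivY t w p) = pderivY t w (pderivY s u p) :=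
    fun u w => derivation_comm_of_apply_X_eq_C (exists_pderivY_X_eq_C s u)
      (exists_pderivY_X_eq_C t w) p
  have expand : ∀ i j : Fin k, sumXPderivY α i (sumXPderivY α j p) =
      ∑ u, ∑ w, X (Sum.inl (α, u)) * (X (Sum.inl (α, w)) * pderivY i w (pderivY j u p)) := by
    intro i j
    simp only [sumXPderivY_apply, map_sum, Derivation.leibniz, pderivY_X_inl, smul_eq_mul,
      mul_zero, Finset.sum_const_zero, add_zero, Finset.mul_sum]
  rw [expand, expand, Finset.sum_comm]
  exact Finset.sum_congr rfl fun u _ => Finset.sum_congr rfl fun w _ => by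
    rw [hcomm, mul_left_comm]

theorem rDerivation_commutator (α : Fin (n + 1)) (s t : Fin k) (p : 𝒫) :
    rDerivation α s (rDerivation α t p) - rDerivation α t (rDerivation α s p) =
      pderivY t s p := by
  have hxx : pderiv (Sum.inl (α, s)) (pderiv (Sum.inl (α, t)) p) =
      pderiv (Sum.inl (α, t)) (pderiv (Sum.inl (α, s)) p) :=
    derivation_comm_of_apply_X_eq_C (exists_pderiv_X_eq_C _) (exists_pderiv_X_eq_C _) p
  simp only [rDerivation, Derivation.add_apply, Derivation.smul_apply, map_add,
    Derivation.map_smul, pderiv_sumXPderivY, sumXPderivY_comm α s t, hxx, pderivY_swap t s]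
  module

theorem pdYp_eq_zero_of_Rop_eq_zero {α : Fin (n + 1)} {s t : Fin k} {p : 𝒫}
    (hs : Rop α s p = 0) (ht : Rop α t p = 0) : pdYp t s p = 0 := by
  rw [pdYp_eq_pderivY, ← rDerivation_commutator α s t, ← Rop_eq_rDerivation α t p,
    ← Rop_eq_rDerivation α s p, hs, ht, map_zero, map_zero, sub_zero]

theorem Rop_eq_pderiv_of_pdYp_eq_zero {α : Fin (n + 1)} {s : Fin k} {p : 𝒫}
    (h : ∀ t, pdYp s t p = 0) : Rop α s p = pderiv (Sum.inl (α, s)) p := by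
  simp [Rop, h]

theorem Lop_eq_pderiv_of_pdYp_eq_zero {α : Fin (n + 1)} {s : Fin k} {p : 𝒫}
    (h : ∀ t, pdYp s t p = 0) : Lop α s p = pderiv (Sum.inl (α, s)) p := by
  simp [Lop, h]

theorem Dop_eq_sum_mulVec {m : ℕ} (ε : Fin (n + 1) → Matrix (Fin m) (Fin m) ℂ) (i : Fin k)
    (Ψ : Fin m → 𝒫) :
    Dop ε i Ψ = ∑ α, Matrix.mulVec ((ε α).map C) fun v => Lop α i (Ψ v) := by
  ext u
  simp [Dop, Matrix.mulVec, dotProduct, Finset.sum_apply]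

theorem pderiv_last_eq_zero_of_Dop_eq_zero {m : ℕ}
    {ε : Fin (n + 1) → Matrix (Fin m) (Fin m) ℂ} (hε : IsUnit (ε (Fin.last n)))
    {s : Fin k} {Ψ : Fin m → 𝒫} (hD : Dop ε s Ψ = 0)
    (hY : ∀ t v, pdYp s t (Ψ v) = 0)
    (hX : ∀ (i : Fin n) v, pderiv (Sum.inl (i.castSucc, s)) (Ψ v) = 0) (v : Fin m) :
    pderiv (Sum.inl (Fin.last n, s)) (Ψ v) = 0 := by
  simp only [Dop_eq_sum_mulVec, Fin.sum_univ_castSucc, Lop_eq_pderiv_of_pdYp_eq_zero (hY · _),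
    hX, Pi.zero_def.symm, Matrix.mulVec_zero, Finset.sum_const_zero, zero_add] at hD
  have hinj := Matrix.mulVec_injective_of_isUnit (hε.map (RingHom.mapMatrix (C : ℂ →+* 𝒫)))
  exact congrFun (hinj (hD.trans (Matrix.mulVec_zero _).symm)) v
end

theorem monogenic_dependence_lemma_general {n k m : ℕ} (hn : 2 ≤ n)
    (ε : Fin (n + 1) → Matrix (Fin m) (Fin m) ℂ)
    (hcl : ∀ α β, ε α * ε β + ε β * ε α =
      if α = β then (-2 : ℂ) • (1 : Matrix (Fin m) (Fin m) ℂ) else 0)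
    (r : ℕ)
    (Ψ : Fin m → MvPolynomial (Var n k) ℂ)
    (hD : ∀ i : Fin k, Dop ε i Ψ = 0)
    (hR : ∀ (α : Fin (n + 1)), (α : ℕ) < n → ∀ (s : Fin k), (s : ℕ) < r →
      ∀ u : Fin m, Rop α s (Ψ u) = 0)
    (hY : ∀ (s t : Fin k), (s : ℕ) < r → r ≤ (t : ℕ) →
      ∀ u : Fin m, pdYp s t (Ψ u) = 0) :
    (∀ (α : Fin (n + 1)) (s : Fin k), (s : ℕ) < r → ∀ u : Fin m,
      pderiv (Sum.inl (α, s)) (Ψ u) = 0) ∧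
    (∀ (c d : Fin k) (hcd : c < d), (c : ℕ) < r → ∀ u : Fin m,
      pderiv (Sum.inr ⟨(c, d), hcd⟩) (Ψ u) = 0) := by
  have hYall : ∀ s t : Fin k, (s : ℕ) < r → ∀ u, pdYp s t (Ψ u) = 0 := by
    intro s t hs u
    by_cases ht : (t : ℕ) < r
    · have h0 : ((0 : Fin (n + 1)) : ℕ) < n := by simp; omega
      exact pdYp_eq_zero_of_Rop_eq_zero (hR 0 h0 t ht u) (hR 0 h0 s hs u)
    · exact hY s t hs (not_lt.mp ht) u
  have hX : ∀ (i : Fin n) (s : Fin k), (s : ℕ) < r → ∀ u,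
      pderiv (Sum.inl (i.castSucc, s)) (Ψ u) = 0 := fun i s hs u => by
    rw [← Rop_eq_pderiv_of_pdYp_eq_zero (hYall s · hs u)]
    exact hR _ i.isLt s hs u
  refine ⟨fun α s hs u => ?_, fun c d hcd hc u => ?_⟩
  · induction α using Fin.lastCases with
    | last =>
      exact pderiv_last_eq_zero_of_Dop_eq_zero (isUnit_of_clifford hcl _) (hD s)
        (hYall s · hs) (hX · s hs) u
    | cast i => exact hX i s hs u
  · rw [← hYall c d hc u, pdYp, dif_pos hcd]

/-- Let `Ψ` be a polynomial monogenic spinor with `R_{αs}Ψ = 0` for all `α = 1,…,n` and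
all columns `s ≤ r` (zero-based: `s.val < r`), and with `∂_{y_{st}}Ψ = 0` for all
`s ≤ r < t`.  Then `Ψ` depends only on the variables `x_{αj}` with `j > r` and `y_{cd}`
with `r < c < d`; in particular `∂_{x_{αs}}Ψ = 0` for every `α = 1,…,n+1` and `s ≤ r`. -/
theorem monogenic_dependence_lemma {n k m : ℕ} (hk : 2 ≤ k) (hn : 2 ≤ n)
    (ε : Fin (n + 1) → Matrix (Fin m) (Fin m) ℂ)
    (hcl : ∀ α β, ε α * ε β + ε β * ε α =
      if α = β then (-2 : ℂ) • (1 : Matrix (Fin m) (Fin m) ℂ) else 0)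
    (r : ℕ) (hr1 : 1 ≤ r) (hrk : r ≤ k - 1)
    (Ψ : Fin m → MvPolynomial (Var n k) ℂ)
    (hD : ∀ i : Fin k, Dop ε i Ψ = 0)
    (hR : ∀ (α : Fin (n + 1)), (α : ℕ) < n → ∀ (s : Fin k), (s : ℕ) < r →
      ∀ u : Fin m, Rop α s (Ψ u) = 0)
    (hY : ∀ (s t : Fin k), (s : ℕ) < r → r ≤ (t : ℕ) →
      ∀ u : Fin m, pdYp s t (Ψ u) = 0) :
    (∀ (α : Fin (n + 1)) (s : Fin k), (s : ℕ) < r → ∀ u : Fin m,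
      pderiv (Sum.inl (α, s)) (Ψ u) = 0) ∧
    (∀ (c d : Fin k) (hcd : c < d), (c : ℕ) < r → ∀ u : Fin m,
      pderiv (Sum.inr ⟨(c, d), hcd⟩) (Ψ u) = 0) :=
  monogenic_dependence_lemma_general hn ε hcl r Ψ hD hR hY
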